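/- Let H be a Hopf algebra over a field k with bijective antipode S, and let λ : H → k be a nonzero left integral for H in H⁎, i.e. h₁·λ(h₂) = λ(h)·1 for all h ∈ H. Assume the map H → H⁎, h ↦ λ ↼ h, is injective, and let χ : H → H be a map satisfying h ⇀ λ = λ ↼ χ(h) for all h ∈ H, i.e. λ(x·h) = λ(χ(h)·x) for all x, h ∈ H (the generalized Nakayama automorphism). Set α := ε ∘ χ. Then χ(h) = α(h₂)·S⁻²(h₁) for all h ∈ H. -/

import Mathlib

/-!
Helper definitions for Sweedler-notation expressions in a Hopf algebra `H` over a field `k`.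
-/

open TensorProduct

variable {k H : Type*} [Field k] [Ring H] [HopfAlgebra k H]

/-- `swl f h = f(h₁) • h₂` in Sweedler notation. -/
noncomputable def swl (f : H →ₗ[k] k) : H →ₗ[k] H :=
  (TensorProduct.lid k H).toLinearMap ∘ₗ (f.rTensor H) ∘ₗ Coalgebra.comul

/-- `swr f h = f(h₂) • h₁` in Sweedler notation. -/
noncomputable def swr (f : H →ₗ[k] k) : H →ₗ[k] H :=
  (TensorProduct.rid k H).toLinearMap ∘ₗ (f.lTensor H) ∘ₗ Coalgebra.comul

/-- `sw2 f g h = f(h₁) * g(h₂)`, an element of `H`, in Sweedler notation. -/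
noncomputable def sw2 (f g : H →ₗ[k] H) : H →ₗ[k] H :=
  (LinearMap.mul' k H) ∘ₗ (TensorProduct.map f g) ∘ₗ Coalgebra.comul

/-- `sw2k f g h = f(h₁) * g(h₂)`, a scalar, in Sweedler notation. -/
noncomputable def sw2k (f g : H →ₗ[k] k) : H →ₗ[k] k :=
  (LinearMap.mul' k k) ∘ₗ (TensorProduct.map f g) ∘ₗ Coalgebra.comul

/-- `comul3 h = (h₁ ⊗ h₂) ⊗ h₃`, the iterated comultiplication `(Δ ⊗ id)Δ`. -/
noncomputable def comul3 : H →ₗ[k] (H ⊗[k] H) ⊗[k] H :=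
  (LinearMap.rTensor H Coalgebra.comul) ∘ₗ Coalgebra.comul

/-- `sw3 f g e h = f(h₁) * g(h₂) * e(h₃)`, an element of `H`, in Sweedler notation. -/
noncomputable def sw3 (f g e : H →ₗ[k] H) : H →ₗ[k] H :=
  (LinearMap.mul' k H) ∘ₗ
    (TensorProduct.map ((LinearMap.mul' k H) ∘ₗ TensorProduct.map f g) e) ∘ₗ comul3

/-!
The left integral yields the identity `λ(a b₂) b₁ = S(λ(a₂ b) a₁)`: write
`λ(a b₂) b₁ = S(a₁) a₂ b₁ λ(a₃ b₂)` and note that `a₂ b₁ ⊗ a₃ b₂ = Δ(a₂ b)`, which `id ⊗ λ`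
sends to `λ(a₂ b) 1`. Using it twice, with the Nakayama relation in between, gives
`(id ⊗ λ(· x)) Δ(χ h) = (id ⊗ λ(· x)) (S⁻² h₁ ⊗ χ h₂)` for every `x`. The functionals `λ(· x)`
separate points, so `Δ(χ h) = S⁻² h₁ ⊗ χ h₂`, and applying `id ⊗ ε` gives the formula.
-/

open Coalgebra HopfAlgebra LinearMap

theorem TensorProduct.eq_of_forall_lTensor_eq {K V W ι : Type*} [Field K]
    [AddCommGroup V] [Module K V] [AddCommGroup W] [Module K W]
    (f : ι → V →ₗ[K] K) (hf : ∀ v, (∀ i, f i v = 0) → v = 0) {t u : W ⊗[K] V}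
    (h : ∀ i, (f i).lTensor W t = (f i).lTensor W u) : t = u := by
  classical
  -- the coordinates of `t - u` along a basis of `W` are vectors killed by every `f i`
  let b := Module.Basis.ofVectorSpace K W
  let E : W ⊗[K] V ≃ₗ[K] _ →₀ V :=
    (TensorProduct.congr b.repr (LinearEquiv.refl K V)).trans (finsuppScalarLeft K V _)
  have hE : ∀ (s : W ⊗[K] V) j i,
      f i (E s j) = TensorProduct.lid K K ((b.coord j).rTensor K ((f i).lTensor W s)) := by
    intro s j i
    induction s using TensorProduct.induction_on with
    | zero => simp
    | tmul w v => simp [E, finsuppScalarLeft_apply_tmul_apply]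
    | add x y hx hy => simp only [map_add, Finsupp.add_apply, hx, hy]
  rw [← sub_eq_zero, ← E.map_eq_zero_iff]
  ext j
  refine hf _ fun i => ?_
  simp [hE, map_sub, h]

theorem TensorProduct.rid_lTensor_map {R M N P Q : Type*} [CommSemiring R]
    [AddCommMonoid M] [Module R M] [AddCommMonoid N] [Module R N]
    [AddCommMonoid P] [Module R P] [AddCommMonoid Q] [Module R Q]
    (f : Q →ₗ[R] R) (g : M →ₗ[R] P) (φ : N →ₗ[R] Q) (t : M ⊗[R] N) :
    TensorProduct.rid R P (f.lTensor P (map g φ t)) =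
      g (TensorProduct.rid R M ((f ∘ₗ φ).lTensor M t)) := by
  induction t using TensorProduct.induction_on with
  | zero => simp
  | tmul x y => simp
  | add x y hx hy => simp only [map_add, hx, hy]

lemma swr_eq_sum (f : H →ₗ[k] k) {c : H} {ι : Type*} (r : Coalgebra.Repr k c ι) :
    swr f c = ∑ i ∈ r.index, f (r.right i) • r.left i := by
  simp [swr, ← r.eq, map_sum]

section LeftIntegral

variable (lam : H →ₗ[k] k)

def IsLeftIntegral : Prop := ∀ h : H, swr lam h = lam h • (1 : H)

noncomputable def contractMulComul (b : H) : H ⊗[k] H →ₗ[k] H :=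
  (TensorProduct.rid k H).toLinearMap ∘ₗ lam.lTensor H ∘ₗ LinearMap.mulRight k (comul b)

lemma contractMulComul_tmul (b y z : H) :
    contractMulComul lam b (y ⊗ₜ z) = y * swr (lam ∘ₗ mulLeft k z) b := by
  simp only [contractMulComul, swr, coe_comp, LinearEquiv.coe_coe, Function.comp_apply,
    mulRight_apply]
  induction comul (R := k) b using TensorProduct.induction_on with
  | zero => simp
  | tmul p q => simp
  | add s s' hs hs' => simp only [mul_add, map_add, hs, hs']

variable {lam}

lemma contractMulComul_comul (hlam : IsLeftIntegral lam) (b c : H) :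
    contractMulComul lam b (comul c) = lam (c * b) • 1 := by
  rw [← hlam]
  simp only [swr, contractMulComul, coe_comp, Function.comp_apply, mulRight_apply,
    Bialgebra.comul_mul]

lemma swr_mulLeft_eq_antipode (hlam : IsLeftIntegral lam) (a b : H) :
    swr (lam ∘ₗ mulLeft k a) b = antipode k (swr (lam ∘ₗ mulRight k b) a) := by
  classical
  let ra := ℛ k a
  let Φ : H ⊗[k] (H ⊗[k] H) →ₗ[k] H := mul' k H ∘ₗ map (antipode k) (contractMulComul lam b)
  have hΦ : ∀ x y z, Φ (x ⊗ₜ (y ⊗ₜ z)) =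
      (antipode k x * y) * contractMulComul lam b (1 ⊗ₜ z) := by
    intro x y z
    simp [Φ, contractMulComul_tmul, mul_assoc]
  have coassoc :=
    sum_tmul_tmul_eq ra (fun i => ℛ k (ra.left i)) (fun i => ℛ k (ra.right i))
  calc swr (lam ∘ₗ mulLeft k a) b = contractMulComul lam b (1 ⊗ₜ a) := by
        rw [contractMulComul_tmul, one_mul]
    _ = ∑ i ∈ ra.index,
          counit (R := k) (ra.left i) • contractMulComul lam b (1 ⊗ₜ ra.right i) := by
        simp_rw [← map_smul, ← TensorProduct.tmul_smul, ← map_sum, ← TensorProduct.tmul_sum,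
          sum_counit_smul]
    _ = Φ (∑ i ∈ ra.index, ∑ j ∈ (ℛ k (ra.left i)).index,
          (ℛ k (ra.left i)).left j ⊗ₜ[k] ((ℛ k (ra.left i)).right j ⊗ₜ[k] ra.right i)) := by
        simp only [map_sum, hΦ, ← Finset.sum_mul, sum_antipode_mul_eq_smul, smul_mul_assoc,
          one_mul]
    _ = ∑ i ∈ ra.index, antipode k (ra.left i) * contractMulComul lam b (comul (ra.right i)) := by
        simp [coassoc, ← TensorProduct.tmul_sum, (ℛ k _).eq, Φ]
    _ = antipode k (swr (lam ∘ₗ mulRight k b) a) := by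
        simp [contractMulComul_comul hlam, swr_eq_sum _ ra, map_sum]

end LeftIntegral

theorem statement5_general
    (S' : H →ₗ[k] H)
    (hS'l : ∀ x : H, S' (HopfAlgebra.antipode (R := k) x) = x)
    (lam : H →ₗ[k] k)
    (hlaml : ∀ h : H, swr lam h = lam h • (1 : H))
    (hinj : Function.Injective (fun h : H => lam ∘ₗ LinearMap.mulLeft k h))
    (χ : H →ₗ[k] H)
    (hχ : ∀ x h : H, lam (x * h) = lam (χ h * x)) :
    ∀ h : H, χ h = S' (S' (swr (Coalgebra.counit (R := k) ∘ₗ χ) h)) := by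
  intro h
  have swr_mulRight : ∀ a b : H,
      swr (lam ∘ₗ mulRight k b) a = S' (swr (lam ∘ₗ mulLeft k a) b) := fun a b => by
    rw [swr_mulLeft_eq_antipode hlaml, hS'l]
  have nakayama_right : ∀ g, lam ∘ₗ mulRight k g = lam ∘ₗ mulLeft k (χ g) :=
    fun g => LinearMap.ext fun x => hχ x g
  have nakayama_left : ∀ x, lam ∘ₗ mulLeft k x = (lam ∘ₗ mulRight k x) ∘ₗ χ :=
    fun x => LinearMap.ext fun g => hχ x g
  have separating : ∀ v : H, (∀ x, lam (v * x) = 0) → v = 0 := fun v hv =>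
    hinj (LinearMap.ext fun x => by simpa using hv x)
  have comul_χ : comul (χ h) = map (S' ∘ₗ S') χ (comul h) := by
    refine TensorProduct.eq_of_forall_lTensor_eq (fun x => lam ∘ₗ mulRight k x) separating
      fun x => (TensorProduct.rid k H).injective ?_
    rw [TensorProduct.rid_lTensor_map]
    change swr _ (χ h) = S' (S' (swr _ h))
    rw [swr_mulRight, ← nakayama_right, swr_mulRight, nakayama_left]
  calc χ h = TensorProduct.rid k H (counit.lTensor H (comul (χ h))) := by simp
    _ = S' (S' (swr (counit ∘ₗ χ) h)) := by rw [comul_χ, TensorProduct.rid_lTensor_map]; rfl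

/-- `H` Hopf algebra over `k` with bijective antipode `S` (linear inverse
`S'`), `λ ≠ 0` a left integral for `H` in `H⁎` (`h₁·λ(h₂) = λ(h)·1`), with `h ↦ λ ↼ h`
injective, and `χ` the generalized Nakayama automorphism: `λ(x·h) = λ(χ(h)·x)`.
With `α := ε ∘ χ`, one has `χ(h) = α(h₂)·S⁻²(h₁)` for all `h`. -/
theorem statement5
    (S' : H →ₗ[k] H)
    (hS'l : ∀ x : H, S' (HopfAlgebra.antipode (R := k) x) = x)
    (hS'r : ∀ x : H, HopfAlgebra.antipode (R := k) (S' x) = x)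
    (lam : H →ₗ[k] k) (hlam0 : lam ≠ 0)
    (hlaml : ∀ h : H, swr lam h = lam h • (1 : H))
    (hinj : Function.Injective (fun h : H => lam ∘ₗ LinearMap.mulLeft k h))
    (χ : H →ₗ[k] H)
    (hχ : ∀ x h : H, lam (x * h) = lam (χ h * x)) :
    ∀ h : H, χ h = S' (S' (swr (Coalgebra.counit (R := k) ∘ₗ χ) h)) :=
  statement5_general S' hS'l lam hlaml hinj χ hχ
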